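/- arXiv:1707.04732 — 2 statements merged into one kernel-verified Lean document; each statement's English description precedes it below -/
import Mathlib

section
/- Third quantifier elimination for n-th power predicates: let α, ℓ, l ≥ 0 with ℓ ≥ 1, let t_0, …, t_{α−1}, u_0, …, u_{ℓ−1}, v_0, …, v_{l−1} be positive rational numbers, let n_0, …, n_{ℓ−1} and m_0, …, m_{l−1} be positive integers, let n be the least common multiple of the n_i, let c_0, …, c_{ℓ−1} be integers with ∑_{i<ℓ} c_i·(n/n_i) = 1, and set a = ∏_{i<ℓ} u_i^{−c_i·(n/n_i)}. Then there exists a positive rational x with x ≠ t_ι for all ι < α, such that for every j < ℓ the number u_j·x is an n_j-th power of a rational number and for every k < l the number v_k·x is not an m_k-th power of a rational number, if and only if: for all i ≠ j the number u_i·u_j^{−1} is a gcd(n_i, n_j)-th power of a rational number, and for every k < l with m_k dividing n the number a·v_k is not an m_k-th power of a rational number. -/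
/-!
Write `N = lcm nᵢ` and `eᵢ = cᵢ · (N / nᵢ)`, so that `∑ eᵢ = 1` and `a = ∏ uᵢ ^ (-eᵢ)`.
If every `uᵢ x = yᵢ ^ nᵢ`, then `x = a · ∏ (uᵢ x) ^ eᵢ = a · (∏ yᵢ ^ cᵢ) ^ N`; this gives the
pairwise conditions on the `uᵢ` and the conditions on the `a vₖ`. Conversely, the pairwise
conditions make `uⱼ a = ∏ (uⱼ / uᵢ) ^ eᵢ` an `nⱼ`-th power, hence `uⱼ · a z ^ N` is one for every
`z`. Take `x = a p ^ N` for a prime `p` that divides neither `a`, nor any `a vₖ`, nor any `t ι`: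
its `p`-adic valuation `N` separates it from the `t ι`, and `vₖ x = (a vₖ) p ^ N` can only be an
`mₖ`-th power if `mₖ ∣ N` and `a vₖ` is one.
-/

open Finset

theorem Nat.gcd_mul_div_eq_mul_div_lcm {a b N : ℕ} (ha : a ∣ N) (hb : b ∣ N) :
    Nat.gcd a b * (N / b) = a * (N / Nat.lcm a b) := by
  rcases Nat.eq_zero_or_pos b with rfl | hb0
  · simp [Nat.eq_zero_of_zero_dvd hb]
  apply Nat.eq_of_mul_eq_mul_right hb0
  calc Nat.gcd a b * (N / b) * b = Nat.gcd a b * (Nat.lcm a b * (N / Nat.lcm a b)) := by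
        rw [mul_assoc, Nat.div_mul_cancel hb, Nat.mul_div_cancel' (Nat.lcm_dvd ha hb)]
    _ = a * (N / Nat.lcm a b) * b := by rw [← mul_assoc, Nat.gcd_mul_lcm]; ring

section DivisionCommMonoid

variable {ι M : Type*} [DivisionCommMonoid M]

theorem exists_pow_div_pow_eq_pow_gcd (y₁ y₂ : M) (n₁ n₂ : ℕ) :
    ∃ y : M, y₁ ^ n₁ / y₂ ^ n₂ = y ^ Nat.gcd n₁ n₂ :=
  ⟨y₁ ^ (n₁ / Nat.gcd n₁ n₂) / y₂ ^ (n₂ / Nat.gcd n₁ n₂), by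
    rw [div_pow, ← pow_mul, ← pow_mul, Nat.div_mul_cancel (Nat.gcd_dvd_left n₁ n₂),
      Nat.div_mul_cancel (Nat.gcd_dvd_right n₁ n₂)]⟩

theorem exists_prod_zpow_mul_eq_pow (s : Finset ι) {f : ι → M} {d : ι → ℕ} {k : ℕ}
    (h : ∀ i, ∃ z, f i ^ d i = z ^ k) (c : ι → ℤ) :
    ∃ z, ∏ i ∈ s, f i ^ (c i * (d i : ℤ)) = z ^ k := by
  choose z hz using h
  refine ⟨∏ i ∈ s, z i ^ c i, ?_⟩
  rw [← prod_pow]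
  refine prod_congr rfl fun i _ => ?_
  rw [mul_comm, zpow_mul, zpow_natCast, hz, ← zpow_natCast, ← zpow_mul, ← zpow_natCast,
    ← zpow_mul, mul_comm]

theorem exists_mul_pow_eq_pow_of_dvd {q : M} {m N : ℕ} (hq : ∃ y, q = y ^ m) (hmN : m ∣ N)
    (z : M) : ∃ y, q * z ^ N = y ^ m := by
  obtain ⟨y, rfl⟩ := hq
  exact ⟨y * z ^ (N / m), by rw [mul_pow, ← pow_mul, Nat.div_mul_cancel hmN]⟩

end DivisionCommMonoid

section CommGroupWithZero

variable {ι G₀ : Type*} [CommGroupWithZero G₀]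

theorem zpow_sum₀ {x : G₀} (hx : x ≠ 0) (s : Finset ι) (e : ι → ℤ) :
    x ^ ∑ i ∈ s, e i = ∏ i ∈ s, x ^ e i := by
  classical
  induction s using Finset.induction_on with
  | empty => simp
  | insert j s hj ih => rw [sum_insert hj, prod_insert hj, zpow_add₀ hx, ih]

theorem prod_mul_zpow_of_sum_eq_one {s : Finset ι} {e : ι → ℤ} (he : ∑ i ∈ s, e i = 1)
    (f : ι → G₀) {x : G₀} (hx : x ≠ 0) :
    ∏ i ∈ s, (f i * x) ^ e i = (∏ i ∈ s, f i ^ e i) * x := by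
  simp_rw [mul_zpow, prod_mul_distrib, ← zpow_sum₀ hx, he, zpow_one]

variable [Fintype ι] {u : ι → G₀} {n : ι → ℕ} {N : ℕ} {c : ι → ℤ}

theorem exists_eq_mul_pow_of_forall_mul_eq_pow (hu : ∀ i, u i ≠ 0) (hN : ∀ i, n i ∣ N)
    (hc : ∑ i, c i * ((N / n i : ℕ) : ℤ) = 1) {x : G₀} (hx : x ≠ 0)
    (h : ∀ i, ∃ y, u i * x = y ^ n i) :
    ∃ z, x = (∏ i, u i ^ (-(c i * ((N / n i : ℕ) : ℤ)))) * z ^ N := by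
  have hpow : ∀ i, ∃ z, (u i * x) ^ (N / n i) = z ^ N := fun i => by
    obtain ⟨y, hy⟩ := h i
    exact ⟨y, by rw [hy, ← pow_mul, Nat.mul_div_cancel' (hN i)]⟩
  obtain ⟨z, hz⟩ := exists_prod_zpow_mul_eq_pow univ hpow c
  refine ⟨z, ?_⟩
  rw [← hz, prod_mul_zpow_of_sum_eq_one hc _ hx, ← mul_assoc, ← prod_mul_distrib]
  simp [zpow_neg, inv_mul_cancel₀ (zpow_ne_zero _ (hu _))]

theorem exists_mul_prod_eq_pow_of_pairwise (hu : ∀ i, u i ≠ 0) (hN : ∀ i, n i ∣ N)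
    (hc : ∑ i, c i * ((N / n i : ℕ) : ℤ) = 1)
    (h : ∀ i j, i ≠ j → ∃ y, u i * (u j)⁻¹ = y ^ Nat.gcd (n i) (n j)) (j : ι) :
    ∃ z, u j * ∏ i, u i ^ (-(c i * ((N / n i : ℕ) : ℤ))) = z ^ n j := by
  have hpow : ∀ i, ∃ z, (u j * (u i)⁻¹) ^ (N / n i) = z ^ n j := fun i => by
    obtain ⟨w, hw⟩ : ∃ w, u j * (u i)⁻¹ = w ^ Nat.gcd (n j) (n i) := by
      rcases eq_or_ne j i with rfl | hji
      · exact ⟨1, by rw [mul_inv_cancel₀ (hu j), one_pow]⟩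
      · exact h j i hji
    exact ⟨w ^ (N / Nat.lcm (n j) (n i)), by
      rw [hw, ← pow_mul, Nat.gcd_mul_div_eq_mul_div_lcm (hN j) (hN i), pow_mul']⟩
  obtain ⟨z, hz⟩ := exists_prod_zpow_mul_eq_pow univ hpow c
  refine ⟨z, ?_⟩
  calc u j * ∏ i, u i ^ (-(c i * ((N / n i : ℕ) : ℤ)))
      = (∏ i, (u i)⁻¹ ^ (c i * ((N / n i : ℕ) : ℤ))) * u j := by
        simp only [zpow_neg, inv_zpow, mul_comm]
    _ = ∏ i, ((u i)⁻¹ * u j) ^ (c i * ((N / n i : ℕ) : ℤ)) :=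
        (prod_mul_zpow_of_sum_eq_one hc _ (hu j)).symm
    _ = z ^ n j := by simp only [mul_comm _ (u j), hz]

end CommGroupWithZero

theorem padicValNat_eq_zero_of_lt {p k : ℕ} (h : k < p) : padicValNat p k = 0 := by
  rcases Nat.eq_zero_or_pos k with rfl | hk
  · exact padicValNat_zero_right p
  · exact padicValNat.eq_zero_of_not_dvd fun hd => (Nat.le_of_dvd hk hd).not_gt h

theorem padicValRat_eq_zero_of_lt {p : ℕ} {q : ℚ} (hnum : q.num.natAbs < p) (hden : q.den < p) :
    padicValRat p q = 0 := by
  simp [padicValRat, padicValInt, padicValNat_eq_zero_of_lt hnum, padicValNat_eq_zero_of_lt hden]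

theorem Set.Finite.exists_prime_forall_padicValRat_eq_zero {S : Set ℚ} (hS : S.Finite) :
    ∃ p, p.Prime ∧ ∀ q ∈ S, padicValRat p q = 0 := by
  let bound : ℚ → ℕ := fun q => max q.num.natAbs q.den + 1
  obtain ⟨p, hp, hprime⟩ := Nat.exists_infinite_primes (hS.toFinset.sup bound)
  refine ⟨p, hprime, fun q hq => ?_⟩
  have hle : max q.num.natAbs q.den + 1 ≤ p :=
    (le_sup (f := bound) (hS.mem_toFinset.2 hq)).trans hp
  exact padicValRat_eq_zero_of_lt (by omega) (by omega)

section Padic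

variable {p : ℕ} [hp : Fact p.Prime] {q : ℚ}

theorem padicValRat_mul_prime_pow (hq : q ≠ 0) (N : ℕ) :
    padicValRat p (q * (p : ℚ) ^ N) = padicValRat p q + N := by
  rw [padicValRat.mul hq (pow_ne_zero _ (by exact_mod_cast hp.out.ne_zero)), padicValRat.pow,
    padicValRat.self hp.out.one_lt, mul_one]

theorem dvd_and_exists_eq_pow_of_mul_prime_pow_eq_pow (hq : q ≠ 0) (hpq : padicValRat p q = 0)
    {N m : ℕ} {z : ℚ} (h : q * (p : ℚ) ^ N = z ^ m) : m ∣ N ∧ ∃ y : ℚ, q = y ^ m := by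
  have hval : (N : ℤ) = m * padicValRat p z := by
    simpa [padicValRat_mul_prime_pow hq, hpq] using congrArg (padicValRat p) h
  have hmN : m ∣ N := by exact_mod_cast Dvd.intro _ hval.symm
  refine ⟨hmN, z / (p : ℚ) ^ (N / m), ?_⟩
  rw [div_pow, ← pow_mul, Nat.div_mul_cancel hmN, ← h,
    mul_div_cancel_right₀ _ (pow_ne_zero _ (by exact_mod_cast hp.out.ne_zero))]

end Padic

theorem third_QE_for_roots_general (α ℓ l : ℕ) (t : Fin α → ℚ)
    (u : Fin ℓ → ℚ)
    (hu : ∀ i, 0 < u i) (n : Fin ℓ → ℕ)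
    (v : Fin l → ℚ) (hv : ∀ k, 0 < v k) (m : Fin l → ℕ)
    (c : Fin ℓ → ℤ)
    (hc : ∑ i, c i * ((Finset.univ.lcm n / n i : ℕ) : ℤ) = 1) :
    (∃ x : ℚ, 0 < x ∧ (∀ ι, x ≠ t ι) ∧ (∀ j, ∃ y : ℚ, u j * x = y ^ n j) ∧
        ∀ k, ¬ ∃ y : ℚ, v k * x = y ^ m k) ↔
      ((∀ i j : Fin ℓ, i ≠ j → ∃ y : ℚ, u i * (u j)⁻¹ = y ^ Nat.gcd (n i) (n j)) ∧
        ∀ k, m k ∣ Finset.univ.lcm n →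
          ¬ ∃ y : ℚ,
            (∏ i, u i ^ (-(c i * ((Finset.univ.lcm n / n i : ℕ) : ℤ)))) * v k
              = y ^ m k) := by
  set N := univ.lcm n
  set a := ∏ i, u i ^ (-(c i * ((N / n i : ℕ) : ℤ)))
  have hN : ∀ i, n i ∣ N := fun i => dvd_lcm (mem_univ i)
  have hu0 : ∀ i, u i ≠ 0 := fun i => (hu i).ne'
  have ha : 0 < a := prod_pos fun i _ => zpow_pos (hu i) _
  constructor
  · rintro ⟨x, hx, -, hux, hvx⟩
    refine ⟨fun i j _ => ?_, fun k hmN hav => ?_⟩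
    · obtain ⟨yi, hyi⟩ := hux i
      obtain ⟨yj, hyj⟩ := hux j
      rw [← div_eq_mul_inv, ← mul_div_mul_right _ _ hx.ne', hyi, hyj]
      exact exists_pow_div_pow_eq_pow_gcd yi yj (n i) (n j)
    · obtain ⟨z, hxz⟩ : ∃ z, x = a * z ^ N :=
        exists_eq_mul_pow_of_forall_mul_eq_pow hu0 hN hc hx.ne' hux
      obtain ⟨y, hy⟩ := exists_mul_pow_eq_pow_of_dvd hav hmN z
      exact hvx k ⟨y, by rw [hxz, ← hy]; ring⟩
  · rintro ⟨hpair, hav⟩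
    have hN0 : N ≠ 0 := fun h => by simp [h] at hc
    obtain ⟨p, hp, hpS⟩ := (Set.toFinite (insert a (Set.range t ∪ Set.range (a * v ·)))
      ).exists_prime_forall_padicValRat_eq_zero
    have := Fact.mk hp
    refine ⟨a * p ^ N, mul_pos ha (pow_pos (Nat.cast_pos.2 hp.pos) N), fun ι hxt => ?_,
      fun j => ?_, fun k ⟨z, hz⟩ => ?_⟩
    · have hval := padicValRat_mul_prime_pow (p := p) ha.ne' N
      rw [hpS a (.inl rfl), hxt, hpS (t ι) (.inr (.inl ⟨ι, rfl⟩))] at hval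
      omega
    · simpa only [mul_assoc] using
        exists_mul_pow_eq_pow_of_dvd (exists_mul_prod_eq_pow_of_pairwise hu0 hN hc hpair j) (hN j) p
    · obtain ⟨hmN, hpow⟩ := dvd_and_exists_eq_pow_of_mul_prime_pow_eq_pow
        (mul_ne_zero ha.ne' (hv k).ne') (hpS _ (.inr (.inr ⟨k, rfl⟩))) (by rw [← hz]; ring)
      exact hav k hmN hpow

/-- **Third quantifier elimination for `n`-th power predicates.**
Like the second quantifier elimination, but additionally the witness `x` can be chosen
different from any of the finitely many positive rationals `t ι`. -/
theorem third_QE_for_roots (α ℓ l : ℕ) (hℓ : 1 ≤ ℓ) (t : Fin α → ℚ)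
    (ht : ∀ ι, 0 < t ι) (u : Fin ℓ → ℚ)
    (hu : ∀ i, 0 < u i) (n : Fin ℓ → ℕ) (hn : ∀ i, 0 < n i)
    (v : Fin l → ℚ) (hv : ∀ k, 0 < v k) (m : Fin l → ℕ) (hm : ∀ k, 0 < m k)
    (c : Fin ℓ → ℤ)
    (hc : ∑ i, c i * ((Finset.univ.lcm n / n i : ℕ) : ℤ) = 1) :
    (∃ x : ℚ, 0 < x ∧ (∀ ι, x ≠ t ι) ∧ (∀ j, ∃ y : ℚ, u j * x = y ^ n j) ∧
        ∀ k, ¬ ∃ y : ℚ, v k * x = y ^ m k) ↔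
      ((∀ i j : Fin ℓ, i ≠ j → ∃ y : ℚ, u i * (u j)⁻¹ = y ^ Nat.gcd (n i) (n j)) ∧
        ∀ k, m k ∣ Finset.univ.lcm n →
          ¬ ∃ y : ℚ,
            (∏ i, u i ^ (-(c i * ((Finset.univ.lcm n / n i : ℕ) : ℤ)))) * v k
              = y ^ m k) :=
  third_QE_for_roots_general α ℓ l t u hu n v hv m c hc
end

section
/- Soundness of the axiom scheme M_{16,n} in the positive rationals: let n ≥ 1, let ℓ ≥ 0, let v_1, …, v_ℓ be positive rational numbers, and let m_1, …, m_ℓ be positive integers none of which divides n. Then the set of positive rational numbers x such that for every k ≤ ℓ the number x^n · v_k is not an m_k-th power of a rational number is infinite. -/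
/-!
Take `x = p` for a prime `p` that is larger than every numerator and denominator of the `v k`,
so that `v_p(v k) = 0`. Then `v_p(p ^ n * v k) = n`, while `v_p(y ^ m) = m * v_p(y)`; hence
`p ^ n * v k = y ^ m k` would force `m k ∣ n`. There are infinitely many such primes.
-/

open Filter

lemma eventually_padicValNat_eq_zero (n : ℕ) : ∀ᶠ p in atTop, padicValNat p n = 0 := by
  filter_upwards [eventually_gt_atTop n] with p hp
  rcases n.eq_zero_or_pos with rfl | hn
  · exact padicValNat_zero_right p
  · exact padicValNat.eq_zero_of_not_dvd (Nat.not_dvd_of_pos_of_lt hn hp)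

lemma eventually_padicValRat_eq_zero (q : ℚ) : ∀ᶠ p in atTop, padicValRat p q = 0 := by
  filter_upwards [eventually_padicValNat_eq_zero q.num.natAbs,
    eventually_padicValNat_eq_zero q.den] with p hnum hden
  simp [padicValRat_def, padicValInt, hnum, hden]

lemma dvd_of_prime_pow_mul_eq_pow {p : ℕ} [hp : Fact p.Prime] {q y : ℚ} (hq : q ≠ 0)
    (hpq : padicValRat p q = 0) {n m : ℕ} (h : (p : ℚ) ^ n * q = y ^ m) : m ∣ n := by
  have hval := congrArg (padicValRat p) h
  rw [padicValRat.mul (pow_ne_zero _ (Nat.cast_ne_zero.2 hp.out.ne_zero)) hq, padicValRat.pow,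
    padicValRat.pow, padicValRat.self hp.out.one_lt, hpq, mul_one, add_zero] at hval
  exact Int.natCast_dvd_natCast.1 ⟨_, hval⟩

theorem M16_sound_general (n : ℕ) (ℓ : ℕ) (v : Fin ℓ → ℚ) (hv : ∀ k, 0 < v k)
    (m : Fin ℓ → ℕ) (hnd : ∀ k, ¬ m k ∣ n) :
    {x : ℚ | 0 < x ∧ ∀ k, ¬ ∃ y : ℚ, x ^ n * v k = y ^ m k}.Infinite := by
  have hgood : ∃ᶠ p in atTop, p.Prime ∧ ∀ k, padicValRat p (v k) = 0 :=
    (Nat.frequently_atTop_iff_infinite.2 Nat.infinite_setOfPred_prime).and_eventually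
      (eventually_all.2 fun k ↦ eventually_padicValRat_eq_zero (v k))
  refine ((Nat.frequently_atTop_iff_infinite.1 hgood).image Nat.cast_injective.injOn).mono ?_
  rintro _ ⟨p, ⟨hp, hpv⟩, rfl⟩
  have : Fact p.Prime := ⟨hp⟩
  exact ⟨Nat.cast_pos.2 hp.pos, fun k ⟨y, hy⟩ ↦
    hnd k (dvd_of_prime_pow_mul_eq_pow (hv k).ne' (hpv k) hy)⟩

/-- **Soundness of the axiom scheme `M₁₆,ₙ` in the positive rationals.**
For `n ≥ 1`, positive rationals `v 1, …, v ℓ` and positive integers `m 1, …, m ℓ` none of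
which divides `n`, there are infinitely many positive rationals `x` such that no
`x ^ n * v k` is an `m k`-th power of a rational. -/
theorem M16_sound (n : ℕ) (hn : 1 ≤ n) (ℓ : ℕ) (v : Fin ℓ → ℚ) (hv : ∀ k, 0 < v k)
    (m : Fin ℓ → ℕ) (hm : ∀ k, 0 < m k) (hnd : ∀ k, ¬ m k ∣ n) :
    {x : ℚ | 0 < x ∧ ∀ k, ¬ ∃ y : ℚ, x ^ n * v k = y ^ m k}.Infinite :=
  M16_sound_general n ℓ v hv m hnd
end
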